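/- arXiv:2408.08252 — 3 statements merged into one kernel-verified Lean document; each statement's English description precedes it below -/
import Mathlib

section
/- The marginal distribution at time 0 induced by composing the soft optimal policies p⋆_{t-1}(x_{t-1}|x_t) ∝ p_{t-1}(x_{t-1}|x_t)·exp(v_{t-1}(x_{t-1})/α) from t = T+1 down to t = 1, starting from the pre-trained initial distribution p_T, equals the tilted distribution p^(α)(x_0) ∝ exp(r(x_0)/α)·p_pre(x_0), where p_pre is the marginal at time 0 of the pre-trained process. -/
/-!
The soft-optimal kernels are Doob `h`-transforms of the pre-trained ones, with
`h_t = exp (v_t / α) = E[exp (r(x₀) / α) | x_t]`. By induction on `t`, the soft-optimal chain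
started at `x` is the pre-trained chain reweighted by `exp (r / α) / h_t x`: composing with one more
step multiplies by `h_{t-1}(y) / h_t(x)`, and the `h_{t-1}(y)` cancels against the normaliser
of the chain started at `y`. Averaging against the initial law `p_T · h_T / Z` cancels `h_T` the
same way and leaves the density `exp (r / α) / Z`.
-/

open MeasureTheory ProbabilityTheory Real
open scoped ENNReal

namespace MeasureTheory.Measure

variable {Y Z : Type*} [MeasurableSpace Y] [MeasurableSpace Z]

theorem withDensity_bind_withDensity_mul_inv_lintegral {μ : Measure Y} (κ : Kernel Y Z)
    [IsSFiniteKernel κ] {g : Z → ℝ≥0∞} (hg : Measurable g) (c : ℝ≥0∞)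
    (h_ne_zero : ∀ y, ∫⁻ z, g z ∂κ y ≠ 0) (h_ne_top : ∀ y, ∫⁻ z, g z ∂κ y ≠ ∞) :
    (μ.withDensity fun y => (∫⁻ z, g z ∂κ y) * c).bind
        (fun y => (κ y).withDensity fun z => g z * (∫⁻ z, g z ∂κ y)⁻¹) =
      (μ.bind κ).withDensity fun z => g z * c := by
  have h_apply : ∀ y s, MeasurableSet s →
      (κ y).withDensity (fun z => g z * (∫⁻ z, g z ∂κ y)⁻¹) s =
        (∫⁻ z in s, g z ∂κ y) * (∫⁻ z, g z ∂κ y)⁻¹ := fun y s hs => by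
    rw [withDensity_apply _ hs, lintegral_mul_const _ hg]
  have h_meas_apply : ∀ s, MeasurableSet s →
      Measurable fun y => (∫⁻ z in s, g z ∂κ y) * (∫⁻ z, g z ∂κ y)⁻¹ := fun s hs =>
    (hg.setLIntegral_kernel hs).mul hg.lintegral_kernel.inv
  have h_meas : Measurable fun y => (κ y).withDensity fun z => g z * (∫⁻ z, g z ∂κ y)⁻¹ :=
    measurable_of_measurable_coe _ fun s hs => by
      simpa only [h_apply _ s hs] using h_meas_apply s hs
  ext s hs
  have h_cancel : ∀ y, (∫⁻ z, g z ∂κ y) * c * ((∫⁻ z in s, g z ∂κ y) * (∫⁻ z, g z ∂κ y)⁻¹) =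
      (∫⁻ z in s, g z ∂κ y) * c := fun y =>
    calc _ = (∫⁻ z in s, g z ∂κ y) * c * ((∫⁻ z, g z ∂κ y) * (∫⁻ z, g z ∂κ y)⁻¹) := by ring
      _ = _ := by rw [ENNReal.mul_inv_cancel (h_ne_zero y) (h_ne_top y), mul_one]
  simp_rw [bind_apply hs h_meas.aemeasurable, h_apply _ s hs, withDensity_apply _ hs]
  rw [lintegral_withDensity_eq_lintegral_mul _ (hg.lintegral_kernel.mul_const c)
    (h_meas_apply s hs)]
  simp only [Pi.mul_apply, h_cancel]
  rw [lintegral_mul_const _ (hg.setLIntegral_kernel hs), lintegral_mul_const _ hg,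
    ← lintegral_indicator hs, lintegral_bind κ.measurable.aemeasurable
      (hg.indicator hs).aemeasurable]
  simp_rw [lintegral_indicator hs]

end MeasureTheory.Measure

theorem ENNReal.ofReal_div_eq_mul_ofReal_inv {a : ℝ} (ha : 0 ≤ a) (b : ℝ) :
    ENNReal.ofReal (a / b) = ENNReal.ofReal a * ENNReal.ofReal b⁻¹ := by
  rw [div_eq_mul_inv, ENNReal.ofReal_mul ha]

theorem integrable_exp_of_le {X : Type*} [MeasurableSpace X] {μ : Measure X}
    [IsFiniteMeasure μ] {f : X → ℝ} (hf : Measurable f) {C : ℝ} (hfC : ∀ x, f x ≤ C) :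
    Integrable (fun x => exp (f x)) μ :=
  .of_bound hf.exp.aestronglyMeasurable (exp C) <| .of_forall fun x => by
    simpa only [norm_of_nonneg (exp_pos _).le] using exp_le_exp.2 (hfC x)

namespace SoftOptimal

variable {X : Type*} [MeasurableSpace X] {K chain Kstar chainStar : ℕ → Kernel X X}
  {r : X → ℝ} {v : ℕ → X → ℝ} {α C : ℝ}

theorem isMarkovKernel_chain (hK : ∀ t, IsMarkovKernel (K t)) (hchain0 : chain 0 = Kernel.id)
    (hchainS : ∀ t, chain (t + 1) = (chain t).comp (K (t + 1))) (t : ℕ) :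
    IsMarkovKernel (chain t) := by
  induction t with
  | zero => rw [hchain0]; infer_instance
  | succ t ih => rw [hchainS]; have := hK (t + 1); infer_instance

theorem ofReal_exp_softValue (hK : ∀ t, IsMarkovKernel (K t)) (hchain0 : chain 0 = Kernel.id)
    (hchainS : ∀ t, chain (t + 1) = (chain t).comp (K (t + 1))) (hr : Measurable r)
    (hrb : ∀ x, |r x| ≤ C) (hα : 0 < α)
    (hv : ∀ t x, v t x = α * log (∫ x0, exp (r x0 / α) ∂(chain t x))) (t : ℕ) (x : X) :
    ENNReal.ofReal (exp (v t x / α)) = ∫⁻ z, ENNReal.ofReal (exp (r z / α)) ∂chain t x := by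
  have := isMarkovKernel_chain hK hchain0 hchainS t
  have h_int : Integrable (fun z => exp (r z / α)) (chain t x) :=
    integrable_exp_of_le (C := C / α) (hr.div_const α) fun z =>
      div_le_div_of_nonneg_right (le_of_abs_le (hrb z)) hα.le
  rw [hv, mul_div_cancel_left₀ _ hα.ne', exp_log (integral_exp_pos h_int),
    ofReal_integral_eq_lintegral_ofReal h_int (.of_forall fun z => (exp_pos _).le)]

theorem chainStar_apply (hK : ∀ t, IsMarkovKernel (K t)) (hchain0 : chain 0 = Kernel.id)
    (hchainS : ∀ t, chain (t + 1) = (chain t).comp (K (t + 1))) (hr : Measurable r)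
    (hrb : ∀ x, |r x| ≤ C) (hα : 0 < α)
    (hv : ∀ t x, v t x = α * log (∫ x0, exp (r x0 / α) ∂(chain t x)))
    (hKstar : ∀ t x, (Kstar t) x =
      ((K t) x).withDensity
        (fun y => ENNReal.ofReal (exp (v (t - 1) y / α) / exp (v t x / α))))
    (hchainStar0 : chainStar 0 = Kernel.id)
    (hchainStarS : ∀ t, chainStar (t + 1) = (chainStar t).comp (Kstar (t + 1))) (t : ℕ) (x : X) :
    chainStar t x = (chain t x).withDensity fun z =>
      ENNReal.ofReal (exp (r z / α)) * (ENNReal.ofReal (exp (v t x / α)))⁻¹ := by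
  have hg : Measurable fun z => ENNReal.ofReal (exp (r z / α)) :=
    (hr.div_const α).exp.ennreal_ofReal
  have h_soft := ofReal_exp_softValue hK hchain0 hchainS hr hrb hα hv
  induction t generalizing x with
  | zero =>
    rw [hchainStar0, h_soft, hchain0, Kernel.id_apply, lintegral_dirac' x hg,
      dirac_withDensity' (hg.mul_const _),
      ENNReal.mul_inv_cancel (by positivity) ENNReal.ofReal_ne_top, one_smul]
  | succ t ih =>
    have := isMarkovKernel_chain hK hchain0 hchainS t
    have h_bind := Measure.withDensity_bind_withDensity_mul_inv_lintegral (μ := K (t + 1) x)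
      (chain t) hg (∫⁻ z, ENNReal.ofReal (exp (r z / α)) ∂chain (t + 1) x)⁻¹
      (fun y => by rw [← h_soft]; positivity)
      (fun y => by rw [← h_soft]; exact ENNReal.ofReal_ne_top)
    rw [← Kernel.comp_apply, ← hchainS] at h_bind
    rw [hchainStarS, Kernel.comp_apply, hKstar, funext ih, Nat.add_sub_cancel]
    simp_rw [ENNReal.ofReal_div_eq_mul_ofReal_inv (exp_pos _).le,
      ENNReal.ofReal_inv_of_pos (exp_pos (v (t + 1) x / α)), h_soft]
    exact h_bind

end SoftOptimal

/-- The time-`0` marginal induced by composing the soft optimal policies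
`p⋆_{t-1}(x_{t-1}|x_t) ∝ p_{t-1}(x_{t-1}|x_t)·exp(v_{t-1}(x_{t-1})/α)` from `t = T+1`
down to `t = 1`, starting from the tilted initial distribution
`p⋆_T ∝ p_T·exp(v_T/α)`, equals the tilted distribution
`p^(α)(x_0) ∝ exp(r(x_0)/α)·p_pre(x_0)`, where `p_pre` is the time-`0` marginal of the
pre-trained process. -/
theorem soft_optimal_marginal_is_tilted
    {X : Type*} [MeasurableSpace X] (T : ℕ)
    (pT : Measure X) [IsProbabilityMeasure pT]
    (K : ℕ → Kernel X X) (hK : ∀ t, IsMarkovKernel (K t))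
    (r : X → ℝ) (hr : Measurable r) (C : ℝ) (hrb : ∀ x, |r x| ≤ C)
    (α : ℝ) (hα : 0 < α)
    (chain : ℕ → Kernel X X)
    (hchain0 : chain 0 = Kernel.id)
    (hchainS : ∀ t, chain (t + 1) = (chain t).comp (K (t + 1)))
    (v : ℕ → X → ℝ)
    (hv : ∀ t x, v t x = α * log (∫ x0, exp (r x0 / α) ∂(chain t x)))
    (Kstar : ℕ → Kernel X X)
    (hKstar : ∀ t x, (Kstar t) x =
      ((K t) x).withDensity
        (fun y => ENNReal.ofReal (exp (v (t - 1) y / α) / exp (v t x / α))))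
    (chainStar : ℕ → Kernel X X)
    (hchainStar0 : chainStar 0 = Kernel.id)
    (hchainStarS : ∀ t, chainStar (t + 1) = (chainStar t).comp (Kstar (t + 1))) :
    letI Z : ℝ := ∫ x, exp (v T x / α) ∂pT
    letI pTstar : Measure X :=
      pT.withDensity (fun x => ENNReal.ofReal (exp (v T x / α) / Z))
    pTstar.bind (fun x => (chainStar T) x) =
      (pT.bind (fun x => (chain T) x)).withDensity
        (fun x0 => ENNReal.ofReal (exp (r x0 / α) / Z)) := by
  have := SoftOptimal.isMarkovKernel_chain hK hchain0 hchainS T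
  have h_soft := SoftOptimal.ofReal_exp_softValue hK hchain0 hchainS hr hrb hα hv T
  have h_star := SoftOptimal.chainStar_apply hK hchain0 hchainS hr hrb hα hv hKstar
    hchainStar0 hchainStarS T
  simp only [funext h_star, ENNReal.ofReal_div_eq_mul_ofReal_inv (exp_pos _).le]
  simp_rw [h_soft]
  exact Measure.withDensity_bind_withDensity_mul_inv_lintegral (chain T)
    (hr.div_const α).exp.ennreal_ofReal _ (fun y => by rw [← h_soft]; positivity)
    (fun y => by rw [← h_soft]; exact ENNReal.ofReal_ne_top)
end

section
/- Composing the masked forward kernel with the parameterized backward kernel reproduces the correct marginal: if x_t ∼ Cat(α_t x + (1 − α_t)m) given a non-mask token x, and the backward step maps the mask state to Cat(((1−α_{t-1})m + (α_{t-1} − α_t)x)/(1−α_t)) and keeps non-mask states fixed, then the resulting distribution of x_{t-1} is Cat(α_{t-1} x + (1 − α_{t-1})m), assuming x̂₀ predicts x exactly. -/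
open Finset

/-- Composing the masked forward kernel with the parameterized backward kernel
reproduces the correct marginal: if `x_t ∼ Cat(α_t x + (1−α_t)m)` for a non-mask
one-hot token `x`, and the backward step maps the mask state to
`Cat(((1−α_{t-1})m + (α_{t-1}−α_t)x)/(1−α_t))` while keeping non-mask states fixed,
then the resulting distribution of `x_{t-1}` is `Cat(α_{t-1}x + (1−α_{t-1})m)`
(assuming `x̂₀` predicts `x` exactly). -/
theorem masked_diffusion_forward_backward_marginal
    {K : ℕ} (ix im : Fin K) (hne : ix ≠ im)
    (x m : Fin K → ℝ)
    (hx : x = fun i => if i = ix then (1 : ℝ) else 0)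
    (hm : m = fun i => if i = im then (1 : ℝ) else 0)
    (aprev at_ : ℝ) (h0 : 0 ≤ at_) (h1 : at_ ≤ aprev) (h2 : aprev ≤ 1) (h3 : at_ < 1) :
    letI forward : Fin K → ℝ := fun i => at_ * x i + (1 - at_) * m i
    letI backward : Fin K → Fin K → ℝ := fun i j =>
      if i = im then ((1 - aprev) * m j + (aprev - at_) * x j) / (1 - at_)
      else if j = i then 1 else 0
    ∀ j, (∑ i, forward i * backward i j) = aprev * x j + (1 - aprev) * m j := by
  subst hx hm
  intro j
  have hat : (1 : ℝ) - at_ ≠ 0 := by linarith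
  have key : ∀ i : Fin K,
      ((at_ * (if i = ix then (1:ℝ) else 0) + (1 - at_) * (if i = im then (1:ℝ) else 0)) *
        (if i = im then ((1 - aprev) * (if j = im then (1:ℝ) else 0) +
            (aprev - at_) * (if j = ix then (1:ℝ) else 0)) / (1 - at_)
          else if j = i then 1 else 0))
      = (if i = ix then (at_ * (if j = ix then (1:ℝ) else 0)) else 0) +
        (if i = im then ((1 - at_) * (((1 - aprev) * (if j = im then (1:ℝ) else 0) +
            (aprev - at_) * (if j = ix then (1:ℝ) else 0)) / (1 - at_))) else 0) := by
    intro i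
    by_cases hix : i = ix
    · subst hix
      simp [hne, Ne.symm hne]
    · by_cases him : i = im
      · subst him; simp [hix]
      · simp [hix, him]
  calc (∑ i, (at_ * (if i = ix then (1:ℝ) else 0) + (1 - at_) * (if i = im then (1:ℝ) else 0)) *
        (if i = im then ((1 - aprev) * (if j = im then (1:ℝ) else 0) +
            (aprev - at_) * (if j = ix then (1:ℝ) else 0)) / (1 - at_)
          else if j = i then 1 else 0))
      = ∑ i, ((if i = ix then (at_ * (if j = ix then (1:ℝ) else 0)) else 0) +
        (if i = im then ((1 - at_) * (((1 - aprev) * (if j = im then (1:ℝ) else 0) +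
            (aprev - at_) * (if j = ix then (1:ℝ) else 0)) / (1 - at_))) else 0)) := by
        exact Finset.sum_congr rfl (fun i _ => key i)
    _ = (at_ * (if j = ix then (1:ℝ) else 0)) +
        ((1 - at_) * (((1 - aprev) * (if j = im then (1:ℝ) else 0) +
            (aprev - at_) * (if j = ix then (1:ℝ) else 0)) / (1 - at_))) := by
        rw [Finset.sum_add_distrib, Finset.sum_ite_eq' univ ix, Finset.sum_ite_eq' univ im]
        simp
    _ = aprev * (if j = ix then (1:ℝ) else 0) + (1 - aprev) * (if j = im then (1:ℝ) else 0) := by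
        rw [mul_div_assoc', mul_comm (1 - at_), mul_div_assoc, div_self hat]
        ring
end

section
/- Exchangeability identity for softmax resampling: if x^(1),…,x^(M) are i.i.d. from density q and an index ζ is drawn from the categorical distribution with probabilities w(x^(m))/Σ_j w(x^(j)) for a positive measurable weight function w, then the density of the selected sample x^(ζ) is p_M(x) = M·q(x)·E[w(x)/(w(x) + Σ_{j=2}^M w(x^(j)))], and for any bounded g, E[g(x^(ζ))] → E_π[g] as M → ∞ where π ∝ w·q, provided w is bounded above and below by positive constants. -/
/-!
Summing over the selected index, `E[g(x^ζ)] = Σ_m E[w(x_m) g(x_m) / Σ_j w(x_j)]`. Splitting off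
coordinate `m` identifies the law of the `M` samples with `Q ⊗ Q^{M-1}`, so all `M` terms are
equal and Fubini gives the density formula.

For the limit, realise every sample size on one i.i.d. sequence `ω : ℕ → X` with law
`Q^ℕ`: the `M`-sample estimator is then the ratio of the empirical means of `w g` and `w`
over `ω 0, …, ω (M-1)`. By the strong law it converges almost surely to `E[w g] / E[w]`, and
being a convex combination of values of `g` it is bounded by `B`, so dominated convergence
passes to the expectations.
-/

open MeasureTheory Filter ProbabilityTheory Finset Topology

lemma abs_div_mul_le_abs {a d : ℝ} (t : ℝ) (ha : 0 ≤ a) (had : a ≤ d) : |a / d * t| ≤ |t| := by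
  rw [abs_mul, abs_of_nonneg (div_nonneg ha (ha.trans had))]
  exact mul_le_of_le_one_left (abs_nonneg t) (div_le_one_of_le₀ had (ha.trans had))

lemma abs_sum_mul_div_sum_le {ι : Type*} (s : Finset ι) {w g : ι → ℝ} {B : ℝ}
    (hw : ∀ i ∈ s, 0 ≤ w i) (hg : ∀ i ∈ s, |g i| ≤ B) (hB : 0 ≤ B) :
    |(∑ i ∈ s, w i * g i) / ∑ i ∈ s, w i| ≤ B := by
  rw [abs_div, abs_of_nonneg (sum_nonneg hw)]
  refine div_le_of_le_mul₀ (sum_nonneg hw) hB ?_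
  calc |∑ i ∈ s, w i * g i| ≤ ∑ i ∈ s, w i * B :=
        (abs_sum_le_sum_abs _ _).trans <| sum_le_sum fun i hi => by
          rw [abs_mul, abs_of_nonneg (hw i hi)]
          exact mul_le_mul_of_nonneg_left (hg i hi) (hw i hi)
    _ = B * ∑ i ∈ s, w i := by rw [← sum_mul, mul_comm]

lemma div_sum_mul_eq_div_add_sum_removeNth {X : Type*} {w g : X → ℝ} {n : ℕ}
    (m : Fin (n + 1)) (xs : Fin (n + 1) → X) :
    (w (xs m) / ∑ j, w (xs j)) * g (xs m) =
      w (xs m) / (w (xs m) + ∑ j, w (m.removeNth xs j)) * g (xs m) := by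
  rw [Fin.sum_univ_succAbove _ m]
  rfl

section Product

variable {X : Type*} [MeasurableSpace X]

theorem integral_pi_comp_removeNth {n : ℕ} (μ : Measure X) [SigmaFinite μ] (m : Fin (n + 1))
    (F : X × (Fin n → X) → ℝ) :
    ∫ xs, F (xs m, m.removeNth xs) ∂Measure.pi (fun _ => μ) =
      ∫ p, F p ∂μ.prod (Measure.pi fun _ => μ) :=
  (measurePreserving_piFinSuccAbove (fun _ => μ) m).integral_comp' F

theorem integrable_pi_comp_removeNth {n : ℕ} (μ : Measure X) [SigmaFinite μ] (m : Fin (n + 1))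
    {F : X × (Fin n → X) → ℝ} (hF : Integrable F (μ.prod (Measure.pi fun _ => μ))) :
    Integrable (fun xs => F (xs m, m.removeNth xs)) (Measure.pi fun _ => μ) :=
  (measurePreserving_piFinSuccAbove (fun _ => μ) m).integrable_comp_of_integrable hF

theorem MeasureTheory.Measure.infinitePi_map_fin (μ : Measure X) [IsProbabilityMeasure μ]
    (M : ℕ) :
    (Measure.infinitePi fun _ : ℕ => μ).map (fun ω (i : Fin M) => ω i) =
      Measure.pi fun _ => μ := by
  have hind : iIndepFun (fun (i : Fin M) (ω : ℕ → X) => ω i) (Measure.infinitePi fun _ => μ) :=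
    (iIndepFun_infinitePi (X := fun _ x => x) fun _ => measurable_id).precomp Fin.val_injective
  rw [hind.map_fun_eq_pi_map fun i => (measurable_pi_apply _).aemeasurable]
  simp only [Measure.infinitePi_map_eval]

theorem strong_law_ae_infinitePi (μ : Measure X) [IsProbabilityMeasure μ] {h : X → ℝ}
    (hh : Measurable h) (hint : Integrable h μ) :
    ∀ᵐ ω ∂Measure.infinitePi (fun _ : ℕ => μ),
      Tendsto (fun n : ℕ => (∑ i ∈ range n, h (ω i)) / n) atTop (𝓝 (∫ x, h x ∂μ)) := by
  have hpres (i : ℕ) := measurePreserving_eval_infinitePi (fun _ : ℕ => μ) i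
  have hident (i : ℕ) : IdentDistrib (fun ω : ℕ → X => ω i) (fun ω => ω 0)
      (Measure.infinitePi fun _ => μ) (Measure.infinitePi fun _ => μ) :=
    ⟨(hpres i).measurable.aemeasurable, (hpres 0).measurable.aemeasurable,
      by rw [(hpres i).map_eq, (hpres 0).map_eq]⟩
  convert strong_law_ae_real (fun i (ω : ℕ → X) => h (ω i))
    ((hpres 0).integrable_comp_of_integrable hint)
    (fun i j hij => (iIndepFun_infinitePi (X := fun _ => h) fun _ => hh).indepFun hij)
    (fun i => (hident i).comp hh) using 5
  rw [← integral_map (hpres 0).measurable.aemeasurable hh.aestronglyMeasurable, (hpres 0).map_eq]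

theorem strong_law_ae_infinitePi_div (μ : Measure X) [IsProbabilityMeasure μ] {f h : X → ℝ}
    (hf : Measurable f) (hf_int : Integrable f μ) (hh : Measurable h) (hh_int : Integrable h μ)
    (hh_ne : ∫ x, h x ∂μ ≠ 0) :
    ∀ᵐ ω ∂Measure.infinitePi (fun _ : ℕ => μ),
      Tendsto (fun n : ℕ => (∑ i ∈ range n, f (ω i)) / ∑ i ∈ range n, h (ω i)) atTop
        (𝓝 ((∫ x, f x ∂μ) / ∫ x, h x ∂μ)) := by
  filter_upwards [strong_law_ae_infinitePi μ hf hf_int, strong_law_ae_infinitePi μ hh hh_int]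
    with ω hf_lim hh_lim
  refine (hf_lim.div hh_lim hh_ne).congr' ?_
  filter_upwards [eventually_ne_atTop 0] with n hn
  exact div_div_div_cancel_right₀ (Nat.cast_ne_zero.2 hn) _ _

end Product

section Softmax

variable {X : Type*} [MeasurableSpace X] {Q : Measure X} [IsProbabilityMeasure Q] {w g : X → ℝ}
  {c C B : ℝ}

theorem integral_softmax_resample_eq (hw : Measurable w) (hc : 0 < c) (hwc : ∀ x, c ≤ w x)
    (hg : Measurable g) (hgB : ∀ x, |g x| ≤ B) (n : ℕ) :
    (∫ xs : Fin (n + 1) → X, ∑ m, (w (xs m) / ∑ j, w (xs j)) * g (xs m)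
        ∂(Measure.pi fun _ => Q)) =
      ∫ x, g x * ((n + 1 : ℕ) *
        ∫ ys : Fin n → X, w x / (w x + ∑ j, w (ys j)) ∂(Measure.pi fun _ => Q)) ∂Q := by
  have hw0 (x : X) : 0 ≤ w x := hc.le.trans (hwc x)
  set F : X × (Fin n → X) → ℝ := fun p => w p.1 / (w p.1 + ∑ j, w (p.2 j)) * g p.1
  have hF : Integrable F (Q.prod (Measure.pi fun _ => Q)) := by
    refine .of_bound (by fun_prop) B (.of_forall fun p => ?_)
    exact (abs_div_mul_le_abs _ (hw0 _)
      (le_add_of_nonneg_right (sum_nonneg fun j _ => hw0 _))).trans (hgB _)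
  calc (∫ xs : Fin (n + 1) → X, ∑ m, (w (xs m) / ∑ j, w (xs j)) * g (xs m) ∂_)
      = ∑ m : Fin (n + 1), ∫ xs, F (xs m, m.removeNth xs) ∂Measure.pi fun _ => Q := by
        simp_rw [div_sum_mul_eq_div_add_sum_removeNth]
        exact integral_finsetSum _ fun m _ => integrable_pi_comp_removeNth Q m hF
    _ = (n + 1 : ℕ) * ∫ p, F p ∂Q.prod (Measure.pi fun _ => Q) := by
        simp [integral_pi_comp_removeNth]
    _ = _ := by
        rw [integral_prod F hF, ← integral_const_mul]
        refine integral_congr_ae (.of_forall fun x => ?_)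
        simp only [F, integral_mul_const]
        ring

theorem integral_softmax_resample_eq_integral_infinitePi (hw : Measurable w) (hg : Measurable g)
    (M : ℕ) :
    (∫ xs : Fin M → X, ∑ m, (w (xs m) / ∑ j, w (xs j)) * g (xs m) ∂(Measure.pi fun _ => Q)) =
      ∫ ω, (∑ i ∈ range M, w (ω i) * g (ω i)) / ∑ i ∈ range M, w (ω i)
        ∂Measure.infinitePi fun _ : ℕ => Q := by
  rw [← Measure.infinitePi_map_fin Q M,
    integral_map (measurable_pi_lambda _ fun i => measurable_pi_apply _).aemeasurable
      (by fun_prop)]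
  refine integral_congr_ae (.of_forall fun ω => ?_)
  simp only [div_mul_eq_mul_div, ← sum_div,
    Fin.sum_univ_eq_sum_range (fun i => w (ω i) * g (ω i)),
    Fin.sum_univ_eq_sum_range (fun i => w (ω i))]

theorem tendsto_integral_softmax_resample (hw : Measurable w) (hc : 0 < c) (hwc : ∀ x, c ≤ w x)
    (hwC : ∀ x, w x ≤ C) (hg : Measurable g) (hgB : ∀ x, |g x| ≤ B) :
    Tendsto
      (fun M : ℕ =>
        ∫ xs : Fin M → X, ∑ m, (w (xs m) / ∑ j, w (xs j)) * g (xs m)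
          ∂(Measure.pi fun _ => Q))
      atTop (𝓝 ((∫ x, w x * g x ∂Q) / (∫ x, w x ∂Q))) := by
  have hw0 (x : X) : 0 ≤ w x := hc.le.trans (hwc x)
  have hw_int : Integrable w Q :=
    .of_bound hw.aestronglyMeasurable C (.of_forall fun x => by
      rw [Real.norm_of_nonneg (hw0 x)]; exact hwC x)
  have hwg_int : Integrable (fun x => w x * g x) Q :=
    hw_int.mul_bdd hg.aestronglyMeasurable (.of_forall hgB)
  have hmean_pos : 0 < ∫ x, w x ∂Q :=
    hc.trans_le <| by simpa using integral_mono (integrable_const c) hw_int hwc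
  simp_rw [integral_softmax_resample_eq_integral_infinitePi hw hg]
  simpa using tendsto_integral_of_dominated_convergence (fun _ => B)
    (fun M => ((by fun_prop : Measurable _).div (by fun_prop)).aestronglyMeasurable)
    (integrable_const B)
    (fun M => .of_forall fun ω => abs_sum_mul_div_sum_le _ (fun i _ => hw0 _) (fun i _ => hgB _)
      ((abs_nonneg _).trans (hgB (ω 0))))
    (strong_law_ae_infinitePi_div Q (f := fun x => w x * g x) (by fun_prop) hwg_int hw hw_int
      hmean_pos.ne')

end Softmax

/-- Exchangeability identity for softmax resampling: if `x⁽¹⁾,…,x⁽ᴹ⁾` are i.i.d.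
from `Q` and an index `ζ` is drawn from the categorical distribution with
probabilities `w(x⁽ᵐ⁾)/Σ_j w(x⁽ʲ⁾)` for a weight function `w` bounded between
positive constants, then the law of the selected sample `x⁽ᶻ⁾` has density
`M·E[w(x)/(w(x)+Σ_{j=2}^M w(x⁽ʲ⁾))]` with respect to `Q` (expressed via test
functions `g`), and `E[g(x⁽ᶻ⁾)] → E_π[g]` as `M → ∞`, where `π ∝ w·Q`. -/
theorem softmax_resampling_density_and_limit
    {X : Type*} [MeasurableSpace X] (Q : Measure X) [IsProbabilityMeasure Q]
    (w : X → ℝ) (hw : Measurable w) (c C : ℝ) (hc : 0 < c)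
    (hwc : ∀ x, c ≤ w x) (hwC : ∀ x, w x ≤ C)
    (g : X → ℝ) (hg : Measurable g) (B : ℝ) (hgB : ∀ x, |g x| ≤ B) :
    (∀ M : ℕ, 0 < M →
      (∫ xs : Fin M → X, ∑ m, (w (xs m) / ∑ j, w (xs j)) * g (xs m)
          ∂(Measure.pi fun _ => Q)) =
        ∫ x, g x *
          ((M : ℝ) *
            ∫ ys : Fin (M - 1) → X, w x / (w x + ∑ j, w (ys j))
              ∂(Measure.pi fun _ => Q)) ∂Q) ∧
    Tendsto
      (fun M : ℕ =>
        ∫ xs : Fin M → X, ∑ m, (w (xs m) / ∑ j, w (xs j)) * g (xs m)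
          ∂(Measure.pi fun _ => Q))
      atTop (nhds ((∫ x, w x * g x ∂Q) / (∫ x, w x ∂Q))) := by
  refine ⟨fun M hM => ?_, tendsto_integral_softmax_resample hw hc hwc hwC hg hgB⟩
  obtain ⟨n, rfl⟩ : ∃ n, M = n + 1 := ⟨M - 1, (Nat.succ_pred_eq_of_pos hM).symm⟩
  exact integral_softmax_resample_eq hw hc hwc hg hgB n
end
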